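/- In the CRWL-theory β(T) simulating an RL-theory T, for all partial terms t, t' over the translated signature: if t ⋈ t' is derivable in β(T), then t is total and t' = t. -/
import Mathlib


/-- Expressions of the CRWL-theory `β(T)` simulating an RL-theory over a ranked
alphabet `Op`: constructors are the symbols of `Op` plus `true`, and there is one
binary defined function symbol `R`; `⊥` and variables are also available. -/
inductive BExpr (Op : ℕ → Type) : Type
  | bot : BExpr Op
  | var : ℕ → BExpr Op
  | tt : BExpr Op
  | op : ∀ {n : ℕ}, Op n → (Fin n → BExpr Op) → BExpr Op
  | R : BExpr Op → BExpr Op → BExpr Op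

namespace BExpr

/-- Substitution. -/
def sub {Op : ℕ → Type} (θ : ℕ → BExpr Op) : BExpr Op → BExpr Op
  | .bot => .bot
  | .var n => θ n
  | .tt => .tt
  | .op f args => .op f (fun i => (args i).sub θ)
  | .R a b => .R (a.sub θ) (b.sub θ)

/-- Partial terms: no occurrence of the defined symbol `R`. -/
def isPTerm {Op : ℕ → Type} : BExpr Op → Prop
  | .bot => True
  | .var _ => True
  | .tt => True
  | .op _ args => ∀ i, (args i).isPTerm
  | .R _ _ => False

/-- Total terms: no `R` and no `⊥`. -/
def isTotal {Op : ℕ → Type} : BExpr Op → Prop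
  | .bot => False
  | .var _ => True
  | .tt => True
  | .op _ args => ∀ i, (args i).isTotal
  | .R _ _ => False

/-- Terms of the original RL-signature `Op` (with variables): no `R`, no `⊥`,
no `true`. -/
def isSTerm {Op : ℕ → Type} : BExpr Op → Prop
  | .bot => False
  | .var _ => True
  | .tt => False
  | .op _ args => ∀ i, (args i).isSTerm
  | .R _ _ => False

/-- Variables occurring in an expression. -/
def vars {Op : ℕ → Type} : BExpr Op → Set ℕ
  | .bot => ∅
  | .var n => {n}
  | .tt => ∅
  | .op _ args => ⋃ i, (args i).vars
  | .R a b => a.vars ∪ b.vars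

end BExpr

/-- A CRWL program rule `lhs → rhs ⇐ conds` with a set of joinability conditions. -/
structure BRule (Op : ℕ → Type) where
  lhs : BExpr Op
  rhs : BExpr Op
  conds : Set (BExpr Op × BExpr Op)

/-- A conditional rewrite rule of the original RL-theory `T`. -/
structure RLRule (Op : ℕ → Type) where
  lhs : BExpr Op
  rhs : BExpr Op
  conds : Set (BExpr Op × BExpr Op)

/-- Joinability conditions `v ⋈ v` for every variable of the given expressions
(the effect of linearisation: each variable may only be instantiated by a total
term). -/
def jvars {Op : ℕ → Type} (V : Set ℕ) : Set (BExpr Op × BExpr Op) :=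
  {p | ∃ v ∈ V, p = (.var v, .var v)}

/-- The program rules of the CRWL-theory `β(T)` for `T = (Op, E, G)`:
reflexivity, transitivity and congruence rules for `R`, the (linearised) rules
`R(t,t') → true` and `R(t',t) → true` for each equation `t = t'` in `E`, and the
(linearised) translations of the rewrite rules in `G`. -/
def betaRules (Op : ℕ → Type) (E : Set (BExpr Op × BExpr Op))
    (G : Set (RLRule Op)) : Set (BRule Op) :=
  -- Reflexivity: R(x₁,x₂) → true ⇐ x₁ ⋈ x₂
  {⟨.R (.var 0) (.var 1), .tt, {(.var 0, .var 1)}⟩} ∪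
  -- Transitivity: R(x,y) → true ⇐ R(x,z) ⋈ true, R(z,y) ⋈ true
  {⟨.R (.var 0) (.var 1), .tt,
    {(.R (.var 0) (.var 2), .tt), (.R (.var 2) (.var 1), .tt)}⟩} ∪
  -- Congruence: R(f(x̄), f(ȳ)) → true ⇐ R(xᵢ,yᵢ) ⋈ true
  {r | ∃ (n : ℕ) (f : Op n), r =
    ⟨.R (.op f fun i => .var i.val) (.op f fun i => .var (n + i.val)), .tt,
      {p | ∃ i : Fin n, p = (.R (.var i.val) (.var (n + i.val)), .tt)}⟩} ∪
  -- Equations: (linearised) R(t,t') → true and R(t',t) → true for t = t' in E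
  {r | ∃ e ∈ E, r = ⟨.R e.1 e.2, .tt, jvars (e.1.vars ∪ e.2.vars)⟩ ∨
                r = ⟨.R e.2 e.1, .tt, jvars (e.1.vars ∪ e.2.vars)⟩} ∪
  -- Rewrite rules: (linearised) R(l,r) → true ⇐ R(aᵢ,bᵢ) ⋈ true, ...
  {r | ∃ ρ ∈ G, r = ⟨.R ρ.lhs ρ.rhs, .tt,
    ((fun p : BExpr Op × BExpr Op => ((.R p.1 p.2 : BExpr Op), (.tt : BExpr Op)))
      '' ρ.conds) ∪
    jvars (ρ.lhs.vars ∪ ρ.rhs.vars ∪ ⋃ p ∈ ρ.conds, p.1.vars ∪ p.2.vars)⟩}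

mutual
  /-- CRWL reduction statements derivable from a program `Γ`. -/
  inductive BRed (Op : ℕ → Type) (Γ : Set (BRule Op)) :
      BExpr Op → BExpr Op → Prop
    | bot (e : BExpr Op) : BRed Op Γ e .bot
    | refl (e : BExpr Op) : BRed Op Γ e e
    | monoOp {n : ℕ} (f : Op n) {a a' : Fin n → BExpr Op} :
        (∀ i, BRed Op Γ (a i) (a' i)) → BRed Op Γ (.op f a) (.op f a')
    | monoR {a a' b b' : BExpr Op} :
        BRed Op Γ a a' → BRed Op Γ b b' → BRed Op Γ (.R a b) (.R a' b')
    | red {r : BRule Op} (hr : r ∈ Γ) (θ : ℕ → BExpr Op)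
        (hθ : ∀ n, (θ n).isPTerm)
        (hc : ∀ p ∈ r.conds, BJoin Op Γ (p.1.sub θ) (p.2.sub θ)) :
        BRed Op Γ (r.lhs.sub θ) (r.rhs.sub θ)
    | trans {a b e : BExpr Op} :
        BRed Op Γ a b → BRed Op Γ b e → BRed Op Γ a e

  /-- CRWL joinability statements derivable from a program `Γ`. -/
  inductive BJoin (Op : ℕ → Type) (Γ : Set (BRule Op)) :
      BExpr Op → BExpr Op → Prop
    | join {a b t : BExpr Op} :
        BRed Op Γ a t → BRed Op Γ b t → t.isTotal → BJoin Op Γ a b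
end

theorem betaRules_lhs_R (Op : ℕ → Type) (E : Set (BExpr Op × BExpr Op))
    (G : Set (RLRule Op)) :
    ∀ r ∈ betaRules Op E G, ∃ x y, r.lhs = BExpr.R x y := by
  intro r hr
  rcases hr with ((((h | h) | h) | h) | h)
  · rw [Set.mem_singleton_iff] at h; subst h; exact ⟨_, _, rfl⟩
  · rw [Set.mem_singleton_iff] at h; subst h; exact ⟨_, _, rfl⟩
  · obtain ⟨n, f, rfl⟩ := h; exact ⟨_, _, rfl⟩
  · obtain ⟨e, _, (rfl | rfl)⟩ := h <;> exact ⟨_, _, rfl⟩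
  · obtain ⟨ρ, _, rfl⟩ := h; exact ⟨_, _, rfl⟩

theorem bred_pterm_total (Op : ℕ → Type) (Γ : Set (BRule Op))
    (hΓ : ∀ r ∈ Γ, ∃ x y, r.lhs = BExpr.R x y) :
    ∀ {a b : BExpr Op}, BRed Op Γ a b → a.isPTerm →
      b.isPTerm ∧ (b.isTotal → a = b) := by
  intro a b h
  refine BRed.rec
    (motive_1 := fun a b _ => a.isPTerm → b.isPTerm ∧ (b.isTotal → a = b))
    (motive_2 := fun _ _ _ => True)
    ?_ ?_ ?_ ?_ ?_ ?_ ?_ h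
  · intro e _; exact ⟨trivial, fun hc => hc.elim⟩
  · intro e ha; exact ⟨ha, fun _ => rfl⟩
  · intro n f _ _ _ ih ha
    refine ⟨fun i => (ih i (ha i)).1, fun hb => ?_⟩
    exact congrArg _ (funext fun i => (ih i (ha i)).2 (hb i))
  · intro _ _ _ _ _ _ _ _ ha; exact ha.elim
  · intro r hr θ hθ hc _ ha
    obtain ⟨x, y, hxy⟩ := hΓ _ hr
    rw [hxy] at ha
    exact ha.elim
  · intro _ _ _ _ _ ih1 ih2 ha
    obtain ⟨hb, he⟩ := ih1 ha
    obtain ⟨hc, hf⟩ := ih2 hb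
    exact ⟨hc, fun ht => (he (hf ht ▸ ht)).trans (hf ht)⟩
  · intros; trivial

/-- In `β(T)`, derivable joinability between partial terms forces totality and
equality: if `t ⋈ t'` is derivable then `t` is total and `t' = t`. -/
theorem beta_join_total_eq (Op : ℕ → Type)
    (E : Set (BExpr Op × BExpr Op)) (G : Set (RLRule Op))
    (hE : ∀ e ∈ E, e.1.isSTerm ∧ e.2.isSTerm)
    (hG : ∀ ρ ∈ G, ρ.lhs.isSTerm ∧ ρ.rhs.isSTerm ∧
      ∀ p ∈ ρ.conds, p.1.isSTerm ∧ p.2.isSTerm)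
    (t t' : BExpr Op) (ht : t.isPTerm) (ht' : t'.isPTerm)
    (hj : BJoin Op (betaRules Op E G) t t') :
    t.isTotal ∧ t' = t := by
  obtain ⟨h1, h2, hw⟩ := hj
  have hΓ := betaRules_lhs_R Op E G
  obtain ⟨_, e1⟩ := bred_pterm_total Op _ hΓ h1 ht
  obtain ⟨_, e2⟩ := bred_pterm_total Op _ hΓ h2 ht'
  have e1 := e1 hw; have e2 := e2 hw
  subst e1; exact ⟨hw, e2⟩
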